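/- arXiv:1402.6568 — 2 statements merged into one kernel-verified Lean document; each statement's English description precedes it below -/
import Mathlib

section
/- Let τ ∈ [-∞, 0], T > 0, β, γ ∈ (0,1) with β + γ < 1, and let F : ℝ² → ℂ satisfy: F(t,·) ∈ L¹(ds) for every t ∈ [0,T]; for Lebesgue-a.e. s ∈ ℝ the map t ↦ F(t,s) is continuous on [0,T] \ {s}; and for every t ∈ [0,T] there exist ε > 0 and C > 0 with ∫_{-∞}^{t-2ε} sup_{r ∈ [max(0,t-ε), min(t+ε,T)]} |F(r,s)| ds < ∞ and |F(r,s)| ≤ C |s|^{-β} |r-s|^{-γ} for all r ∈ [max(0,t-ε), min(t+ε,T)] and s ∈ [t-2ε, r). Then the function I_F(t) := ∫_{-∞}^t F(t,s) ds is continuous on [0,T]. -/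
/-!
Fix `t₀` and a small `δ > 0`, and split `∫_{-∞}^t F(t, s) ds` at `t₀ - 2δ`. Since
`|s|^(-β) |t - s|^(-γ) ≤ |s|^(-(β+γ)) + |s - t|^(-(β+γ))` and `|x|^(-θ)` has integral at most
`2 L^(1-θ)/(1-θ)` over any interval of length `L`, the piece over `(t₀ - 2δ, t]` is
`O(δ^(1-β-γ))` uniformly for `t` within `δ` of `t₀`. The piece over `(-∞, t₀ - 2δ]` is continuous
at `t₀` by dominated convergence: beyond `t₀ - 2ε` the integrand is dominated by its supremum over
the time window, and on `(t₀ - 2ε, t₀ - 2δ]` the singularity at `s = t` stays at distance `≥ δ`,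
leaving the integrable bound `C δ^(-γ) |s|^(-β)`. So the integral is a locally uniform limit of
functions continuous at `t₀`.
-/

open Real MeasureTheory Set
open scoped Topology

lemma intervalIntegrable_abs_rpow_neg {θ : ℝ} (hθ : θ < 1) (a b : ℝ) :
    IntervalIntegrable (fun x => |x| ^ (-θ)) volume a b := by
  have hloc : LocallyIntegrable (fun x : ℝ => |x| ^ (-θ)) volume :=
    locallyIntegrable_of_norm_le_rpow (by simp) (α := θ) (C := 1) (by simpa using hθ)
      (Filter.Eventually.of_forall fun x => by simp [abs_of_nonneg (rpow_nonneg (abs_nonneg x) _)])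
      (continuous_abs.measurable.pow_const _).aestronglyMeasurable
  exact (hloc.integrableOn_isCompact isCompact_uIcc).intervalIntegrable

lemma integral_abs_rpow_neg_le_of_nonneg {θ a b : ℝ} (hθ₀ : 0 ≤ θ) (hθ₁ : θ < 1) (ha : 0 ≤ a)
    (hab : a ≤ b) : ∫ x in a..b, |x| ^ (-θ) ≤ (b - a) ^ (1 - θ) / (1 - θ) := by
  have habs : ∫ x in a..b, |x| ^ (-θ) = ∫ x in a..b, x ^ (-θ) :=
    intervalIntegral.integral_congr fun x hx => by
      rw [uIcc_of_le hab] at hx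
      simp only [abs_of_nonneg (ha.trans hx.1)]
  rw [habs, integral_rpow (Or.inl (by linarith)), neg_add_eq_sub]
  refine div_le_div_of_nonneg_right ?_ (by linarith)
  have := rpow_add_le_add_rpow (sub_nonneg.2 hab) ha (by linarith) (by linarith : 1 - θ ≤ 1)
  rw [sub_add_cancel] at this
  linarith

lemma integral_abs_rpow_neg_le {θ a b : ℝ} (hθ₀ : 0 ≤ θ) (hθ₁ : θ < 1) (hab : a ≤ b) :
    ∫ x in a..b, |x| ^ (-θ) ≤ 2 * ((b - a) ^ (1 - θ) / (1 - θ)) := by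
  have hmono : ∀ {L M : ℝ}, 0 ≤ L → L ≤ M → L ^ (1 - θ) / (1 - θ) ≤ M ^ (1 - θ) / (1 - θ) :=
    fun hL hLM => by gcongr
  have hnonpos : ∀ {a b : ℝ}, b ≤ 0 → a ≤ b →
      ∫ x in a..b, |x| ^ (-θ) ≤ (b - a) ^ (1 - θ) / (1 - θ) := fun hb hab => by
    have h := integral_abs_rpow_neg_le_of_nonneg hθ₀ hθ₁ (neg_nonneg.2 hb) (neg_le_neg hab)
    rw [← intervalIntegral.integral_comp_neg, neg_sub_neg] at h
    simpa only [abs_neg] using h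
  have hX : 0 ≤ (b - a) ^ (1 - θ) / (1 - θ) :=
    div_nonneg (rpow_nonneg (sub_nonneg.2 hab) _) (by linarith)
  rcases le_total 0 a with ha | ha
  · linarith [integral_abs_rpow_neg_le_of_nonneg hθ₀ hθ₁ ha hab]
  rcases le_total b 0 with hb | hb
  · linarith [hnonpos hb hab]
  rw [← intervalIntegral.integral_add_adjacent_intervals (intervalIntegrable_abs_rpow_neg hθ₁ a 0)
    (intervalIntegrable_abs_rpow_neg hθ₁ 0 b)]
  have hneg := (hnonpos le_rfl ha).trans (hmono (by linarith) (by linarith : 0 - a ≤ b - a))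
  have hpos := (integral_abs_rpow_neg_le_of_nonneg hθ₀ hθ₁ le_rfl hb).trans
    (hmono (by linarith) (by linarith : b - 0 ≤ b - a))
  linarith

lemma abs_rpow_neg_mul_abs_sub_rpow_neg_le {β γ : ℝ} (hβ : 0 < β) (hγ : 0 < γ) (s t : ℝ) :
    |s| ^ (-β) * |t - s| ^ (-γ) ≤ |s| ^ (-(β + γ)) + |s - t| ^ (-(β + γ)) := by
  rw [abs_sub_comm s t]
  have key : ∀ {p q x y : ℝ}, 0 < p → 0 < q → |x| ≤ |y| →
      |x| ^ (-p) * |y| ^ (-q) ≤ |x| ^ (-(p + q)) := by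
    intro p q x y hp hq hxy
    rcases (abs_nonneg x).eq_or_lt with hx | hx
    · rw [← hx, zero_rpow (by linarith), zero_mul]
      exact rpow_nonneg le_rfl _
    calc |x| ^ (-p) * |y| ^ (-q) ≤ |x| ^ (-p) * |x| ^ (-q) :=
          mul_le_mul_of_nonneg_left (rpow_le_rpow_of_nonpos hx hxy (by linarith))
            (rpow_nonneg hx.le _)
      _ = |x| ^ (-(p + q)) := by rw [neg_add, rpow_add hx]
  have h₁ := rpow_nonneg (abs_nonneg s) (-(β + γ))
  have h₂ := rpow_nonneg (abs_nonneg (t - s)) (-(β + γ))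
  rcases le_total |s| |t - s| with h | h
  · linarith [key hβ hγ h]
  · linarith [mul_comm (|s| ^ (-β)) (|t - s| ^ (-γ)), add_comm γ β ▸ key hγ hβ h]

lemma norm_integral_Ioc_le_of_norm_le_singular {E : Type*} [NormedAddCommGroup E]
    [NormedSpace ℝ E] {f : ℝ → E} {β γ C a b : ℝ} (hβ : 0 < β) (hγ : 0 < γ) (hβγ : β + γ < 1)
    (hC : 0 ≤ C) (hab : a ≤ b) (hf : ∀ s ∈ Ioo a b, ‖f s‖ ≤ C * |s| ^ (-β) * |b - s| ^ (-γ)) :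
    ‖∫ s in Ioc a b, f s‖ ≤ 4 * C * ((b - a) ^ (1 - (β + γ)) / (1 - (β + γ))) := by
  set θ := β + γ
  have hθ : 0 ≤ θ := by positivity
  have hint₀ := intervalIntegrable_abs_rpow_neg hβγ a b
  have hint_b : IntervalIntegrable (fun s => |s - b| ^ (-θ)) volume a b := by
    simpa using (intervalIntegrable_abs_rpow_neg hβγ (a - b) (b - b)).comp_sub_right b
  have hbound_b : ∫ s in a..b, |s - b| ^ (-θ) ≤ 2 * ((b - a) ^ (1 - θ) / (1 - θ)) := by
    rw [intervalIntegral.integral_comp_sub_right (fun s => |s| ^ (-θ))]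
    simpa using integral_abs_rpow_neg_le hθ hβγ (sub_le_sub_right hab b)
  calc ‖∫ s in Ioc a b, f s‖ = ‖∫ s in Ioo a b, f s‖ := by rw [integral_Ioc_eq_integral_Ioo]
    _ ≤ ∫ s in Ioo a b, C * (|s| ^ (-θ) + |s - b| ^ (-θ)) := by
        refine norm_integral_le_of_norm_le
          (IntegrableOn.mono_set ((hint₀.1.add hint_b.1).const_mul C) Ioo_subset_Ioc_self)
          (ae_restrict_of_forall_mem measurableSet_Ioo fun s hs => ?_)
        calc ‖f s‖ ≤ C * (|s| ^ (-β) * |b - s| ^ (-γ)) := mul_assoc C _ _ ▸ hf s hs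
          _ ≤ _ := mul_le_mul_of_nonneg_left (abs_rpow_neg_mul_abs_sub_rpow_neg_le hβ hγ s b) hC
    _ = C * ((∫ s in a..b, |s| ^ (-θ)) + ∫ s in a..b, |s - b| ^ (-θ)) := by
        rw [← integral_Ioc_eq_integral_Ioo, ← intervalIntegral.integral_of_le hab,
          intervalIntegral.integral_const_mul, intervalIntegral.integral_add hint₀ hint_b]
    _ ≤ C * (2 * ((b - a) ^ (1 - θ) / (1 - θ)) + 2 * ((b - a) ^ (1 - θ) / (1 - θ))) :=
        mul_le_mul_of_nonneg_left (add_le_add (integral_abs_rpow_neg_le hθ hβγ hab) hbound_b) hC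
    _ = 4 * C * ((b - a) ^ (1 - θ) / (1 - θ)) := by ring

lemma norm_le_iSup_norm_of_continuousOn {X E : Type*} [TopologicalSpace X] [NormedAddCommGroup E]
    {f : X → E} {K : Set X} (hK : IsCompact K) (hf : ContinuousOn f K) {x : X} (hx : x ∈ K) :
    ‖f x‖ ≤ ⨆ y : K, ‖f y‖ := by
  have hbdd := hK.bddAbove_image hf.norm
  rw [image_eq_range] at hbdd
  exact le_ciSup hbdd ⟨x, hx⟩

lemma mem_Icc_max_min_of_mem_Ioo {T t₀ δ ε t : ℝ} (ht : t ∈ Icc 0 T)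
    (htδ : t ∈ Ioo (t₀ - δ) (t₀ + δ)) (hδε : δ ≤ ε) :
    t ∈ Icc (max 0 (t₀ - ε)) (min (t₀ + ε) T) :=
  ⟨max_le ht.1 (by linarith [htδ.1]), le_min (by linarith [htδ.2]) ht.2⟩

section ParametricIntegral

variable {E : Type*} [NormedAddCommGroup E] [NormedSpace ℝ E] {F : ℝ → ℝ → E} {I : Set ℝ}

lemma continuousWithinAt_setIntegral_of_dominated {S : Set ℝ} {g : ℝ → ℝ} {t₀ : ℝ}
    (hmeas : ∀ t ∈ I, AEStronglyMeasurable (F t))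
    (hcont : ∀ᵐ s, ContinuousOn (fun t => F t s) (I \ {s}))
    (ht₀ : t₀ ∈ I) (hS : MeasurableSet S) (ht₀S : t₀ ∉ S) (hg : IntegrableOn g S)
    (hbound : ∀ᶠ t in 𝓝[I] t₀, ∀ᵐ s ∂volume.restrict S, ‖F t s‖ ≤ g s) :
    ContinuousWithinAt (fun t => ∫ s in S, F t s) I t₀ := by
  refine continuousWithinAt_of_dominated ?_ hbound hg ?_
  · exact eventually_nhdsWithin_of_forall fun t ht => (hmeas t ht).restrict
  · filter_upwards [ae_restrict_of_ae hcont, ae_restrict_mem hS] with s hs hsS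
    have hne : t₀ ≠ s := fun h => ht₀S (h ▸ hsS)
    exact continuousWithinAt_sdiff_singleton.1 (hs t₀ ⟨ht₀, hne⟩)

lemma continuousWithinAt_integral_Iic_of_integrableOn_iSup {T ε t₀ : ℝ} (hε : 0 < ε)
    (hmeas : ∀ t ∈ Icc 0 T, AEStronglyMeasurable (F t))
    (hcont : ∀ᵐ s, ContinuousOn (fun t => F t s) (Icc 0 T \ {s})) (ht₀ : t₀ ∈ Icc 0 T)
    (hsup : IntegrableOn (fun s => ⨆ r : Icc (max 0 (t₀ - ε)) (min (t₀ + ε) T), ‖F r s‖)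
      (Iic (t₀ - 2 * ε))) :
    ContinuousWithinAt (fun t => ∫ s in Iic (t₀ - 2 * ε), F t s) (Icc 0 T) t₀ := by
  refine continuousWithinAt_setIntegral_of_dominated hmeas hcont ht₀ measurableSet_Iic
    (fun h => by linarith [mem_Iic.1 h]) hsup ?_
  have hnear : ∀ᶠ t in 𝓝[Icc 0 T] t₀, t ∈ Icc 0 T ∩ Ioo (t₀ - ε) (t₀ + ε) :=
    inter_mem_nhdsWithin _ (Ioo_mem_nhds (by linarith) (by linarith))
  filter_upwards [hnear] with t ⟨ht, htε⟩
  filter_upwards [ae_restrict_of_ae hcont, ae_restrict_mem measurableSet_Iic] with s hs hsε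
  refine norm_le_iSup_norm_of_continuousOn isCompact_Icc (hs.mono fun r hr => ?_)
    (mem_Icc_max_min_of_mem_Ioo ht htε le_rfl)
  have : t₀ - ε ≤ r := (le_max_right _ _).trans hr.1
  exact ⟨⟨(le_max_left _ _).trans hr.1, hr.2.trans (min_le_right _ _)⟩,
    fun h => by linarith [mem_singleton_iff.1 h, mem_Iic.1 hsε]⟩

lemma continuousWithinAt_integral_Iic_of_local_bounds {T β γ C ε δ t₀ : ℝ}
    (hβ : β < 1) (hγ : 0 ≤ γ) (hC : 0 ≤ C)
    (hInt : ∀ t ∈ Icc 0 T, Integrable (F t))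
    (hcont : ∀ᵐ s, ContinuousOn (fun t => F t s) (Icc 0 T \ {s}))
    (ht₀ : t₀ ∈ Icc 0 T) (hδ : 0 < δ) (hδε : δ ≤ ε)
    (hsup : IntegrableOn (fun s => ⨆ r : Icc (max 0 (t₀ - ε)) (min (t₀ + ε) T), ‖F r s‖)
      (Iic (t₀ - 2 * ε)))
    (hbound : ∀ r ∈ Icc (max 0 (t₀ - ε)) (min (t₀ + ε) T), ∀ s ∈ Ico (t₀ - 2 * ε) r,
      ‖F r s‖ ≤ C * |s| ^ (-β) * |r - s| ^ (-γ)) :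
    ContinuousWithinAt (fun t => ∫ s in Iic (t₀ - 2 * δ), F t s) (Icc 0 T) t₀ := by
  have hmeas : ∀ t ∈ Icc 0 T, AEStronglyMeasurable (F t) := fun t ht =>
    (hInt t ht).aestronglyMeasurable
  have hnear : ∀ᶠ t in 𝓝[Icc 0 T] t₀, t ∈ Icc 0 T ∩ Ioo (t₀ - δ) (t₀ + δ) :=
    inter_mem_nhdsWithin _ (Ioo_mem_nhds (by linarith) (by linarith))
  have hfar := continuousWithinAt_integral_Iic_of_integrableOn_iSup (hδ.trans_le hδε) hmeas hcont
    ht₀ hsup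
  have hmid : ContinuousWithinAt (fun t => ∫ s in Ioc (t₀ - 2 * ε) (t₀ - 2 * δ), F t s)
      (Icc 0 T) t₀ := by
    refine continuousWithinAt_setIntegral_of_dominated (g := fun s => C * δ ^ (-γ) * |s| ^ (-β))
      hmeas hcont ht₀ measurableSet_Ioc (fun h => by linarith [h.2])
      ((intervalIntegrable_abs_rpow_neg hβ _ _).1.const_mul _) ?_
    filter_upwards [hnear] with t ⟨ht, htδ⟩
    filter_upwards [ae_restrict_mem measurableSet_Ioc] with s hs
    have hts : δ ≤ |t - s| := by rw [abs_of_pos] <;> linarith [hs.2, htδ.1]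
    calc ‖F t s‖ ≤ C * |s| ^ (-β) * |t - s| ^ (-γ) :=
          hbound t (mem_Icc_max_min_of_mem_Ioo ht htδ hδε) s
            ⟨hs.1.le, by linarith [hs.2, htδ.1]⟩
      _ ≤ C * |s| ^ (-β) * δ ^ (-γ) :=
          mul_le_mul_of_nonneg_left (rpow_le_rpow_of_nonpos hδ hts (by linarith)) (by positivity)
      _ = C * δ ^ (-γ) * |s| ^ (-β) := by ring
  have hsplit : ∀ t ∈ Icc 0 T, ∫ s in Iic (t₀ - 2 * δ), F t s =
      (∫ s in Iic (t₀ - 2 * ε), F t s) + ∫ s in Ioc (t₀ - 2 * ε) (t₀ - 2 * δ), F t s :=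
    fun t ht => by
      rw [← sub_eq_iff_eq_add', intervalIntegral.integral_Iic_sub_Iic (hInt t ht).integrableOn
        (hInt t ht).integrableOn, intervalIntegral.integral_of_le (by linarith)]
  exact (hfar.add hmid).congr hsplit (hsplit t₀ ht₀)

end ParametricIntegral

theorem continuity_of_volterra_integral_general
    (T : ℝ) (β γ : ℝ) (hβ : β ∈ Set.Ioo (0 : ℝ) 1)
    (hγ : γ ∈ Set.Ioo (0 : ℝ) 1) (hβγ : β + γ < 1)
    (F : ℝ → ℝ → ℂ)
    (hInt : ∀ t ∈ Set.Icc 0 T, Integrable (F t) (volume : Measure ℝ))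
    (hCont : ∀ᵐ s ∂(volume : Measure ℝ),
      ContinuousOn (fun t => F t s) (Set.Icc 0 T \ {s}))
    (hLoc : ∀ t ∈ Set.Icc 0 T, ∃ ε > (0 : ℝ), ∃ C > (0 : ℝ),
      (IntegrableOn
        (fun s => ⨆ r : Set.Icc (max 0 (t - ε)) (min (t + ε) T),
          ‖F (r : ℝ) s‖)
        (Set.Iic (t - 2 * ε)) (volume : Measure ℝ)) ∧
      (∀ r ∈ Set.Icc (max 0 (t - ε)) (min (t + ε) T), ∀ s ∈ Set.Ico (t - 2 * ε) r,
        ‖F r s‖ ≤ C * |s| ^ (-β) * |r - s| ^ (-γ))) :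
    ContinuousOn (fun t => ∫ s in Set.Iic t, F t s) (Set.Icc 0 T) := by
  intro t₀ ht₀
  obtain ⟨ε, hε, C, hC, hsup, hbound⟩ := hLoc t₀ ht₀
  set θ := β + γ
  refine continuousWithinAt_of_locally_uniform_approx_of_continuousWithinAt ht₀ fun u hu => ?_
  obtain ⟨η, hη, hηu⟩ := Metric.mem_uniformity_dist.1 hu
  have hsmall :
      Filter.Tendsto (fun δ : ℝ => 4 * C * ((3 * δ) ^ (1 - θ) / (1 - θ))) (𝓝 0) (𝓝 0) := by
    have hθ : 0 < 1 - θ := by linarith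
    simpa [zero_rpow hθ.ne'] using ((continuous_const.mul continuous_id).rpow_const
      fun _ => Or.inr hθ.le).div_const (1 - θ) |>.const_mul (4 * C) |>.tendsto 0
  obtain ⟨δ, ⟨hδη, hδε⟩, hδ⟩ := (((hsmall.eventually (gt_mem_nhds hη)).and
    (eventually_le_nhds hε)).filter_mono nhdsWithin_le_nhds |>.and
      (self_mem_nhdsWithin (s := Ioi 0))).exists
  refine ⟨Icc 0 T ∩ Ioo (t₀ - δ) (t₀ + δ),
    inter_mem_nhdsWithin _ (Ioo_mem_nhds (by linarith) (by linarith)),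
    fun t => ∫ s in Iic (t₀ - 2 * δ), F t s,
    continuousWithinAt_integral_Iic_of_local_bounds hβ.2 hγ.1.le hC.le hInt hCont ht₀ hδ hδε
      hsup hbound,
    fun t ⟨ht, htδ⟩ => hηu ?_⟩
  have hwindow := mem_Icc_max_min_of_mem_Ioo ht htδ hδε
  calc dist (∫ s in Iic t, F t s) (∫ s in Iic (t₀ - 2 * δ), F t s)
      = ‖∫ s in Ioc (t₀ - 2 * δ) t, F t s‖ := by
        rw [dist_eq_norm, intervalIntegral.integral_Iic_sub_Iic (hInt t ht).integrableOn
          (hInt t ht).integrableOn, intervalIntegral.integral_of_le (by linarith [htδ.1])]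
    _ ≤ 4 * C * ((t - (t₀ - 2 * δ)) ^ (1 - θ) / (1 - θ)) :=
        norm_integral_Ioc_le_of_norm_le_singular hβ.1 hγ.1 hβγ hC.le (by linarith [htδ.1])
          fun s hs => hbound t hwindow s ⟨by linarith [hs.1], hs.2⟩
    _ ≤ 4 * C * ((3 * δ) ^ (1 - θ) / (1 - θ)) := by
        gcongr <;> linarith [htδ.1, htδ.2]
    _ < η := hδη

theorem continuity_of_volterra_integral
    (T : ℝ) (hT : 0 < T) (β γ : ℝ) (hβ : β ∈ Set.Ioo (0 : ℝ) 1)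
    (hγ : γ ∈ Set.Ioo (0 : ℝ) 1) (hβγ : β + γ < 1)
    (F : ℝ → ℝ → ℂ)
    (hInt : ∀ t ∈ Set.Icc 0 T, Integrable (F t) (volume : Measure ℝ))
    (hCont : ∀ᵐ s ∂(volume : Measure ℝ),
      ContinuousOn (fun t => F t s) (Set.Icc 0 T \ {s}))
    (hLoc : ∀ t ∈ Set.Icc 0 T, ∃ ε > (0 : ℝ), ∃ C > (0 : ℝ),
      (IntegrableOn
        (fun s => ⨆ r : Set.Icc (max 0 (t - ε)) (min (t + ε) T),
          ‖F (r : ℝ) s‖)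
        (Set.Iic (t - 2 * ε)) (volume : Measure ℝ)) ∧
      (∀ r ∈ Set.Icc (max 0 (t - ε)) (min (t + ε) T), ∀ s ∈ Set.Ico (t - 2 * ε) r,
        ‖F r s‖ ≤ C * |s| ^ (-β) * |r - s| ^ (-γ))) :
    ContinuousOn (fun t => ∫ s in Set.Iic t, F t s) (Set.Icc 0 T) :=
  continuity_of_volterra_integral_general T β γ hβ hγ hβγ F hInt hCont hLoc
end

section
/- Let τ ∈ [-∞, 0], T > 0, β, γ ∈ (0,1) with β + γ < 1, and let F : ℝ² → ℂ satisfy: F(t,·) ∈ L¹(ds) for every t ∈ [0,T]; F is continuous on {(t,s) : τ ≤ s ≤ t}; for Lebesgue-a.e. s the map t ↦ F(t,s) is continuously differentiable on [0,T] \ {s}; and for every t ∈ [0,T] there exist ε > 0 and C > 0 such that ∫_{-∞}^{t-2ε} sup_{r ∈ [max(0,t-ε), min(t+ε,T)]} |∂F/∂r (r,s)| ds < ∞ and |∂F/∂r (r,s)| ≤ C |s|^{-β} |r-s|^{-γ} for all r ∈ [max(0,t-ε), min(t+ε,T)] and s ∈ [t-2ε, r). Then I_F(t) := ∫_{-∞}^t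 F(t,s) ds is continuously differentiable on [0,T] with derivative I_F'(t) = F(t,t) + ∫_{-∞}^t ∂F/∂t (t,s) ds. -/
open Real MeasureTheory Set

open Filter Topology

/-!
With θ = β + γ < 1, Young's inequality |s|^(-β) |r - s|^(-γ) ≤ |s|^(-θ) + |r - s|^(-θ) dominates
∂F/∂r near the diagonal by a kernel whose integral over an interval of length L is O(L^(1-θ)).
Split each integral over (-∞, a] at a point x slightly to the left of t₀. On (-∞, x] the
integrands (F'(t, ·), or by the mean value theorem the difference quotients of F) are dominated
uniformly for t near t₀, so dominated convergence applies; the pieces over [x, a] are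
O((t₀ - x)^(1-θ)) uniformly in t. For the derivative write
I_F(t) - I_F(t₀) = ∫_{-∞}^{min(t,t₀)} (F(t,·) - F(t₀,·)) + ∫_{t₀}^{t} F(max(t,t₀), ·):
the second term divided by t - t₀ tends to F(t₀,t₀) by continuity of F on the region s ≤ t,
and the first to ∫_{-∞}^{t₀} F'(t₀,·) by the argument above.
-/

lemma intervalIntegrable_abs_rpow {r : ℝ} (hr : -1 < r) (a b : ℝ) :
    IntervalIntegrable (fun x => |x| ^ r) volume a b := by
  have hpos := (intervalIntegral.intervalIntegrable_rpow' hr (a := a) (b := b)).norm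
  have hneg := ((IntervalIntegrable.iff_comp_neg (a := -a) (b := -b)).1
    (intervalIntegral.intervalIntegrable_rpow' hr)).norm
  rw [neg_neg, neg_neg] at hneg
  refine (hpos.add hneg).mono_fun (continuous_abs.measurable.pow_const r).aestronglyMeasurable
    (ae_of_all _ fun x => ?_)
  simp only [Real.norm_eq_abs]
  rw [abs_of_nonneg (rpow_nonneg (abs_nonneg x) r),
    abs_of_nonneg (add_nonneg (abs_nonneg (x ^ r)) (abs_nonneg ((-x) ^ r)))]
  rcases le_total 0 x with hx | hx
  · rw [abs_of_nonneg hx]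
    exact le_add_of_le_of_nonneg (le_abs_self _) (abs_nonneg _)
  · rw [abs_of_nonpos hx]
    exact le_add_of_nonneg_of_le (abs_nonneg _) (le_abs_self _)

lemma intervalIntegrable_abs_sub_rpow {r : ℝ} (hr : -1 < r) (c a b : ℝ) :
    IntervalIntegrable (fun x => |x - c| ^ r) volume a b := by
  simpa using (intervalIntegrable_abs_rpow hr (a - c) (b - c)).comp_sub_right c

lemma integral_abs_rpow_neg {θ : ℝ} (hθ : θ < 1) {b : ℝ} (hb : 0 ≤ b) :
    ∫ x in (0 : ℝ)..b, |x| ^ (-θ) = b ^ (1 - θ) / (1 - θ) := by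
  rw [intervalIntegral.integral_congr (g := fun x => x ^ (-θ)) fun x hx => by
      rw [uIcc_of_le hb] at hx
      simp only [abs_of_nonneg hx.1],
    integral_rpow (Or.inl (by linarith)), zero_rpow (by linarith), sub_zero, neg_add_eq_sub]

lemma abs_sub_max_min_le {a b c s : ℝ} (hab : a ≤ b) (hs : s ∈ Icc a b) :
    |s - max a (min c b)| ≤ |s - c| := by
  rcases le_total c a with hca | hac
  · rw [min_eq_left (hca.trans hab), max_eq_left hca, abs_of_nonneg (by linarith [hs.1]),
      abs_of_nonneg (by linarith [hs.1])]
    linarith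
  rcases le_total c b with hcb | hbc
  · rw [min_eq_left hcb, max_eq_right hac]
  · rw [min_eq_right hbc, max_eq_right hab, abs_of_nonpos (by linarith [hs.2]),
      abs_of_nonpos (by linarith [hs.2])]
    linarith

lemma integral_abs_sub_rpow_neg_le {θ : ℝ} (hθ0 : 0 ≤ θ) (hθ1 : θ < 1) (c : ℝ) {a b : ℝ}
    (hab : a ≤ b) : ∫ s in a..b, |s - c| ^ (-θ) ≤ 2 / (1 - θ) * (b - a) ^ (1 - θ) := by
  have hr : -1 < -θ := by linarith
  -- `d` is the point of `[a, b]` nearest to `c`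
  set d := max a (min c b)
  have had : a ≤ d := le_max_left _ _
  have hdb : d ≤ b := max_le hab (min_le_right _ _)
  have hleft : ∫ u in (a - d)..0, |u| ^ (-θ) = (d - a) ^ (1 - θ) / (1 - θ) := by
    have h := intervalIntegral.integral_comp_neg (a := 0) (b := d - a) fun u => |u| ^ (-θ)
    simp only [abs_neg, neg_zero, neg_sub] at h
    rw [← h, integral_abs_rpow_neg hθ1 (by linarith)]
  calc ∫ s in a..b, |s - c| ^ (-θ)
      ≤ ∫ s in a..b, |s - d| ^ (-θ) := by
        refine intervalIntegral.integral_mono_ae_restrict hab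
          (intervalIntegrable_abs_sub_rpow hr c a b) (intervalIntegrable_abs_sub_rpow hr d a b) ?_
        filter_upwards [ae_restrict_mem measurableSet_Icc,
          ae_restrict_of_ae (Measure.ae_ne volume d)] with s hs hsd
        exact rpow_le_rpow_of_nonpos (abs_pos.2 (sub_ne_zero.2 hsd)) (abs_sub_max_min_le hab hs)
          (by linarith)
    _ = ∫ u in (a - d)..(b - d), |u| ^ (-θ) :=
        intervalIntegral.integral_comp_sub_right (fun u => |u| ^ (-θ)) d
    _ = (d - a) ^ (1 - θ) / (1 - θ) + (b - d) ^ (1 - θ) / (1 - θ) := by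
        rw [← intervalIntegral.integral_add_adjacent_intervals (b := 0)
          (intervalIntegrable_abs_rpow hr _ _) (intervalIntegrable_abs_rpow hr _ _), hleft,
          integral_abs_rpow_neg hθ1 (by linarith)]
    _ ≤ 2 / (1 - θ) * (b - a) ^ (1 - θ) := by
        have h1θ : 0 < 1 - θ := by linarith
        have hda : (d - a) ^ (1 - θ) ≤ (b - a) ^ (1 - θ) :=
          rpow_le_rpow (by linarith) (by linarith) h1θ.le
        have hbd : (b - d) ^ (1 - θ) ≤ (b - a) ^ (1 - θ) :=
          rpow_le_rpow (by linarith) (by linarith) h1θ.le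
        rw [← add_div, div_mul_eq_mul_div, div_le_div_iff_of_pos_right h1θ]
        linarith

lemma rpow_neg_mul_rpow_neg_le_add {β γ u v : ℝ} (hβ : 0 < β) (hγ : 0 < γ) (hu : 0 ≤ u)
    (hv : 0 ≤ v) : u ^ (-β) * v ^ (-γ) ≤ u ^ (-(β + γ)) + v ^ (-(β + γ)) := by
  rcases hu.eq_or_lt with rfl | hu
  · rw [zero_rpow (by linarith), zero_mul]
    positivity
  rcases hv.eq_or_lt with rfl | hv
  · rw [zero_rpow (by linarith), mul_zero]
    positivity
  rcases le_total u v with huv | hvu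
  · calc u ^ (-β) * v ^ (-γ) ≤ u ^ (-β) * u ^ (-γ) := by
          gcongr ?_ * ?_
          exact rpow_le_rpow_of_nonpos hu huv (neg_nonpos.2 hγ.le)
      _ = u ^ (-(β + γ)) := by rw [← rpow_add hu, neg_add]
      _ ≤ _ := le_add_of_nonneg_right (by positivity)
  · calc u ^ (-β) * v ^ (-γ) ≤ v ^ (-β) * v ^ (-γ) := by
          gcongr ?_ * ?_
          exact rpow_le_rpow_of_nonpos hv hvu (neg_nonpos.2 hβ.le)
      _ = v ^ (-(β + γ)) := by rw [← rpow_add hv, neg_add]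
      _ ≤ _ := le_add_of_nonneg_left (by positivity)

noncomputable def singularKernel (θ m s : ℝ) : ℝ := |s| ^ (-θ) + |s - m| ^ (-θ)

section SingularKernel

variable {θ : ℝ}

lemma intervalIntegrable_singularKernel (hθ : θ < 1) (m a b : ℝ) :
    IntervalIntegrable (singularKernel θ m) volume a b := by
  have hr : -1 < -θ := by linarith
  exact (intervalIntegrable_abs_rpow hr a b).add (intervalIntegrable_abs_sub_rpow hr m a b)

lemma integral_singularKernel_le (hθ0 : 0 ≤ θ) (hθ1 : θ < 1) (m : ℝ) {a b : ℝ} (hab : a ≤ b) :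
    ∫ s in a..b, singularKernel θ m s ≤ 4 / (1 - θ) * (b - a) ^ (1 - θ) := by
  have hr : -1 < -θ := by linarith
  have h0 := integral_abs_sub_rpow_neg_le hθ0 hθ1 0 hab
  have hm := integral_abs_sub_rpow_neg_le hθ0 hθ1 m hab
  simp only [sub_zero] at h0
  unfold singularKernel
  rw [intervalIntegral.integral_add (intervalIntegrable_abs_rpow hr a b)
    (intervalIntegrable_abs_sub_rpow hr m a b)]
  have : 4 / (1 - θ) * (b - a) ^ (1 - θ) = 2 * (2 / (1 - θ) * (b - a) ^ (1 - θ)) := by ring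
  linarith

lemma singularKernel_le_of_lt_of_le (hθ : 0 ≤ θ) {s m r : ℝ} (hsm : s < m) (hmr : m ≤ r) :
    singularKernel θ r s ≤ singularKernel θ m s := by
  refine add_le_add le_rfl ?_
  rw [abs_sub_comm, abs_sub_comm s m, abs_of_pos (by linarith), abs_of_pos (by linarith)]
  exact rpow_le_rpow_of_nonpos (by linarith) (by linarith) (by linarith)

lemma norm_integral_le_of_norm_le_singularKernel {E : Type*} [NormedAddCommGroup E]
    [NormedSpace ℝ E] {g : ℝ → E} {C x m : ℝ} (hθ0 : 0 ≤ θ) (hθ1 : θ < 1) (hC : 0 ≤ C)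
    (hxm : x ≤ m) (hg : ∀ᵐ s, s ∈ Ioo x m → ‖g s‖ ≤ C * singularKernel θ m s) :
    ‖∫ s in x..m, g s‖ ≤ 4 * C / (1 - θ) * (m - x) ^ (1 - θ) := by
  have hg' : ∀ᵐ s, s ∈ Ioc x m → ‖g s‖ ≤ C * singularKernel θ m s := by
    filter_upwards [hg, Measure.ae_ne volume m] with s hs hsm
    exact fun h => hs ⟨h.1, lt_of_le_of_ne h.2 hsm⟩
  calc ‖∫ s in x..m, g s‖ ≤ ∫ s in x..m, C * singularKernel θ m s :=
        intervalIntegral.norm_integral_le_of_norm_le hxm hg'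
          ((intervalIntegrable_singularKernel hθ1 m x m).const_mul C)
    _ ≤ C * (4 / (1 - θ) * (m - x) ^ (1 - θ)) := by
        rw [intervalIntegral.integral_const_mul]
        exact mul_le_mul_of_nonneg_left (integral_singularKernel_le hθ0 hθ1 m hxm) hC
    _ = 4 * C / (1 - θ) * (m - x) ^ (1 - θ) := by ring

lemma tendsto_mul_rpow_sub_nhdsLT (hθ : θ < 1) (K t₀ : ℝ) :
    Tendsto (fun x => K * (2 * (t₀ - x)) ^ (1 - θ)) (𝓝[<] t₀) (𝓝 0) := by
  have hcont : Continuous fun x : ℝ => K * (2 * (t₀ - x)) ^ (1 - θ) := by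
    have := continuous_rpow_const (q := 1 - θ) (by linarith)
    fun_prop
  simpa [zero_rpow (by linarith : 1 - θ ≠ 0)] using
    (hcont.tendsto t₀).mono_left nhdsWithin_le_nhds

end SingularKernel

lemma norm_slope_le_of_norm_deriv_le {E : Type*} [NormedAddCommGroup E] [NormedSpace ℝ E]
    {f f' : ℝ → E} {a b B : ℝ} (hf : ∀ r ∈ uIcc a b, HasDerivAt f (f' r) r)
    (hB : ∀ r ∈ uIcc a b, ‖f' r‖ ≤ B) : ‖slope f a b‖ ≤ B := by
  have hB0 : 0 ≤ B := (norm_nonneg _).trans (hB a left_mem_uIcc)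
  have hmv := (convex_uIcc a b).norm_image_sub_le_of_norm_hasDerivWithin_le
    (fun r hr => (hf r hr).hasDerivWithinAt) hB left_mem_uIcc right_mem_uIcc
  rcases eq_or_ne b a with rfl | hab
  · simpa using hB0
  rw [slope_def_module, norm_smul, norm_inv, inv_mul_le_iff₀ (norm_pos_iff.2 (sub_ne_zero.2 hab))]
  linarith [mul_comm B ‖b - a‖]

lemma norm_slope_le_of_lt_min {E : Type*} [NormedAddCommGroup E] [NormedSpace ℝ E]
    {F F' : ℝ → ℝ → E} {S : Set ℝ} {s r₀ r₁ B : ℝ} (hS : OrdConnected S) (hr₀ : r₀ ∈ S)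
    (hr₁ : r₁ ∈ S) (hF : ∀ r ∈ S \ {s}, HasDerivAt (fun r => F r s) (F' r s) r)
    (hs : s < min r₀ r₁) (hB : ∀ r ∈ uIcc r₀ r₁, ‖F' r s‖ ≤ B) :
    ‖slope (fun r => F r s) r₀ r₁‖ ≤ B :=
  norm_slope_le_of_norm_deriv_le
    (fun r hr => hF r ⟨hS.uIcc_subset hr₀ hr₁ hr, ne_of_gt (hs.trans_le hr.1)⟩) hB

lemma integrable_slope {α E : Type*} [MeasurableSpace α] [NormedAddCommGroup E]
    [NormedSpace ℝ E] {μ : Measure α} {F : ℝ → α → E} {a b : ℝ} (ha : Integrable (F a) μ)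
    (hb : Integrable (F b) μ) : Integrable (fun s => slope (fun r => F r s) a b) μ := by
  simp only [slope_def_module]
  exact (hb.sub ha).smul (b - a)⁻¹

lemma aestronglyMeasurable_of_hasDerivWithinAt {α E : Type*} [MeasurableSpace α]
    [NormedAddCommGroup E] [NormedSpace ℝ E] {μ : Measure α} {f : ℝ → α → E} {g : α → E}
    {S : Set ℝ} {t : ℝ} (ht : t ∈ S) (hacc : AccPt t (𝓟 S))
    (hf : ∀ r ∈ S, AEStronglyMeasurable (f r) μ)
    (hd : ∀ᵐ a ∂μ, HasDerivWithinAt (fun r => f r a) (g a) S t) :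
    AEStronglyMeasurable g μ := by
  classical
  -- extend `f` by zero off `S`, so that every difference quotient is measurable
  set f₀ : ℝ → α → E := fun r => if r ∈ S then f r else 0
  have hf₀ : ∀ r, AEStronglyMeasurable (f₀ r) μ := fun r => by
    by_cases hr : r ∈ S
    · simpa [f₀, hr] using hf r hr
    · simp only [f₀, hr, if_false]
      exact aestronglyMeasurable_const
  have : (𝓝[S \ {t}] t).NeBot := by
    rwa [AccPt, nhdsWithin, inf_assoc, inf_principal, inter_comm, ← Set.sdiff_eq] at hacc
  refine aestronglyMeasurable_of_tendsto_ae (𝓝[S \ {t}] t)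
    (f := fun r a => slope (fun r => f₀ r a) t r) (fun r => ?_) ?_
  · simp only [slope_def_module]
    exact ((hf₀ r).sub (hf₀ t)).const_smul (r - t)⁻¹
  filter_upwards [hd] with a ha
  refine (hasDerivWithinAt_iff_tendsto_slope.1 ha).congr' ?_
  filter_upwards [self_mem_nhdsWithin] with r hr
  simp [slope_def_module, f₀, hr.1, ht]

lemma tendsto_setIntegral_Iic_of_tail_le {ι E : Type*} [NormedAddCommGroup E] [NormedSpace ℝ E]
    {l : Filter ι} {a : ι → ℝ} {g : ι → ℝ → E} {g₀ : ℝ → E} {ψ : ℝ → ℝ} {t₀ : ℝ}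
    (ha : Tendsto a l (𝓝 t₀)) (hg : ∀ᶠ i in l, IntegrableOn (g i) (Iic (a i)))
    (hg₀ : IntegrableOn g₀ (Iic t₀)) (hψ : Tendsto ψ (𝓝[<] t₀) (𝓝 0))
    (hbody : ∀ᶠ x in 𝓝[<] t₀,
      Tendsto (fun i => ∫ s in Iic x, g i s) l (𝓝 (∫ s in Iic x, g₀ s)))
    (htail : ∀ᶠ x in 𝓝[<] t₀,
      (∀ᶠ i in l, ‖∫ s in x..a i, g i s‖ ≤ ψ x) ∧ ‖∫ s in x..t₀, g₀ s‖ ≤ ψ x) :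
    Tendsto (fun i => ∫ s in Iic (a i), g i s) l (𝓝 (∫ s in Iic t₀, g₀ s)) := by
  rw [Metric.tendsto_nhds]
  intro δ hδ
  obtain ⟨x, hψx, hxbody, ⟨hxtail, hxtail₀⟩, hxt₀⟩ :=
    ((hψ.eventually (gt_mem_nhds (by linarith : 0 < δ / 3))).and
      (hbody.and (htail.and self_mem_nhdsWithin))).exists
  have hx : ∀ᶠ i in l, x < a i := ha.eventually (lt_mem_nhds hxt₀)
  have hg₀x : IntegrableOn g₀ (Iic x) := hg₀.mono_set (Iic_subset_Iic.2 (le_of_lt hxt₀))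
  filter_upwards [hx, hg, hxtail, Metric.tendsto_nhds.1 hxbody (δ / 3) (by linarith)]
    with i hxi hgi htaili hbodyi
  have hgix : IntegrableOn (g i) (Iic x) := hgi.mono_set (Iic_subset_Iic.2 hxi.le)
  rw [dist_eq_norm] at hbodyi ⊢
  rw [← sub_add_cancel (∫ s in Iic (a i), g i s) (∫ s in Iic x, g i s),
    ← sub_add_cancel (∫ s in Iic t₀, g₀ s) (∫ s in Iic x, g₀ s),
    intervalIntegral.integral_Iic_sub_Iic hgix hgi, intervalIntegral.integral_Iic_sub_Iic hg₀x hg₀]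
  calc _ = ‖((∫ s in x..a i, g i s) - ∫ s in x..t₀, g₀ s)
          + ((∫ s in Iic x, g i s) - ∫ s in Iic x, g₀ s)‖ := by congr 1; abel
    _ ≤ ‖∫ s in x..a i, g i s‖ + ‖∫ s in x..t₀, g₀ s‖
          + ‖(∫ s in Iic x, g i s) - ∫ s in Iic x, g₀ s‖ :=
        (norm_add_le _ _).trans (add_le_add_left (norm_sub_le _ _) _)
    _ < δ := by linarith

lemma eventually_mem_and_abs_sub_le {S : Set ℝ} {t₀ ρ : ℝ} (hρ : 0 < ρ) :
    ∀ᶠ t in 𝓝[S] t₀, t ∈ S ∧ |t - t₀| ≤ ρ :=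
  eventually_mem_nhdsWithin.and
    (mem_nhdsWithin_of_mem_nhds (Metric.closedBall_mem_nhds t₀ hρ))

lemma slope_integral_Iic {E : Type*} [NormedAddCommGroup E] [NormedSpace ℝ E]
    {F : ℝ → ℝ → E} {t₀ t : ℝ} (h₀ : Integrable (F t₀)) (h : Integrable (F t)) :
    slope (fun t => ∫ s in Iic t, F t s) t₀ t
      = (∫ s in Iic (min t₀ t), slope (fun r => F r s) t₀ t)
        + (t - t₀)⁻¹ • ∫ s in t₀..t, F (max t₀ t) s := by
  simp only [slope_def_module]
  rw [integral_smul, integral_sub h.integrableOn h₀.integrableOn, ← smul_add]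
  congr 1
  rcases le_total t₀ t with ht | ht
  · rw [min_eq_left ht, max_eq_right ht,
      ← intervalIntegral.integral_Iic_sub_Iic h.integrableOn h.integrableOn]
    abel
  · rw [min_eq_right ht, max_eq_left ht, intervalIntegral.integral_symm,
      ← intervalIntegral.integral_Iic_sub_Iic h₀.integrableOn h₀.integrableOn]
    abel

lemma tendsto_smul_integral_of_eventually_norm_sub_le {E : Type*} [NormedAddCommGroup E]
    [NormedSpace ℝ E] [CompleteSpace E] {G : ℝ → ℝ → E} {y : E} {l : Filter ℝ} {t₀ : ℝ}
    (hl : l ≤ 𝓝[≠] t₀)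
    (hG : ∀ᶠ t in l, IntervalIntegrable (G t) volume t₀ t)
    (hnear : ∀ δ > 0, ∀ᶠ t in l, ∀ s ∈ uIoc t₀ t, ‖G t s - y‖ ≤ δ) :
    Tendsto (fun t => (t - t₀)⁻¹ • ∫ s in t₀..t, G t s) l (𝓝 y) := by
  rw [Metric.tendsto_nhds]
  intro δ hδ
  filter_upwards [hl self_mem_nhdsWithin, hG, hnear (δ / 2) (half_pos hδ)] with t ht hGt hnt
  have hne : t - t₀ ≠ 0 := sub_ne_zero.2 ht
  have hsub : (t - t₀)⁻¹ • (∫ s in t₀..t, G t s) - y = (t - t₀)⁻¹ • ∫ s in t₀..t, (G t s - y) := by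
    rw [intervalIntegral.integral_sub hGt intervalIntegrable_const, intervalIntegral.integral_const,
      smul_sub, smul_smul, inv_mul_cancel₀ hne, one_smul]
  rw [dist_eq_norm, hsub, norm_smul, norm_inv, Real.norm_eq_abs]
  calc |t - t₀|⁻¹ * ‖∫ s in t₀..t, (G t s - y)‖ ≤ |t - t₀|⁻¹ * (δ / 2 * |t - t₀|) := by
        gcongr
        exact intervalIntegral.norm_integral_le_of_norm_le_const hnt
    _ = δ / 2 := by field_simp [abs_ne_zero.2 hne]
    _ < δ := half_lt_self hδ

lemma eventually_norm_sub_le_of_continuousWithinAt {E : Type*} [NormedAddCommGroup E]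
    {F : ℝ → ℝ → E} {τ t₀ δ : ℝ} (ht₀ : τ ≤ t₀)
    (hF : ContinuousWithinAt (fun p : ℝ × ℝ => F p.1 p.2) {p | τ ≤ p.2 ∧ p.2 ≤ p.1} (t₀, t₀))
    (hδ : 0 < δ) : ∀ᶠ t in 𝓝[Ici τ] t₀, ∀ s ∈ uIoc t₀ t, ‖F (max t₀ t) s - F t₀ t₀‖ ≤ δ := by
  obtain ⟨ρ, hρ, hρF⟩ := Metric.continuousWithinAt_iff.1 hF δ hδ
  filter_upwards [eventually_mem_and_abs_sub_le (half_pos hρ)] with t ⟨htτ, htt₀⟩ s ⟨hs₁, hs₂⟩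
  rw [← dist_eq_norm]
  refine (hρF (x := (max t₀ t, s)) ⟨(le_min ht₀ htτ).trans hs₁.le, hs₂⟩ ?_).le
  have hmax : max t₀ t ≤ t₀ + ρ / 2 := max_le (by linarith) (by linarith [(abs_le.1 htt₀).2])
  have hmin : t₀ - ρ / 2 ≤ min t₀ t := le_min (by linarith) (by linarith [(abs_le.1 htt₀).1])
  rw [Prod.dist_eq, Real.dist_eq, Real.dist_eq]
  exact max_lt (abs_lt.2 ⟨by linarith [le_max_left t₀ t], by linarith⟩)
    (abs_lt.2 ⟨by linarith, by linarith [min_le_left t₀ t]⟩)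

def window (T t ε : ℝ) : Set ℝ := Icc (max 0 (t - ε)) (min (t + ε) T)

lemma mem_window {T t ε r : ℝ} (hr : r ∈ Icc 0 T) (hrt : |r - t| ≤ ε) : r ∈ window T t ε :=
  ⟨max_le hr.1 (by linarith [(abs_le.1 hrt).1]), le_min (by linarith [(abs_le.1 hrt).2]) hr.2⟩

lemma norm_le_iSup_window {E : Type*} [NormedAddCommGroup E] {F' : ℝ → ℝ → E}
    {T t ε r s : ℝ} (hε : 0 < ε) (hcont : ContinuousOn (fun r => F' r s) (Icc 0 T \ {s}))
    (hs : s ≤ t - 2 * ε) (hr : r ∈ window T t ε) :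
    ‖F' r s‖ ≤ ⨆ r' : window T t ε, ‖F' r' s‖ := by
  have hsub : window T t ε ⊆ Icc 0 T \ {s} := fun r' hr' =>
    ⟨⟨(le_max_left _ _).trans hr'.1, hr'.2.trans (min_le_right _ _)⟩,
      fun h => by linarith [(le_max_right _ _).trans hr'.1, show r' = s from h]⟩
  have hbdd :=
    isCompact_Icc.bddAbove_image (continuous_norm.comp_continuousOn (hcont.mono hsub))
  rw [image_eq_range] at hbdd
  exact le_ciSup hbdd ⟨r, hr⟩

/-- The local hypothesis of the theorem at `t`, after Young's inequality has merged the two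
singular factors into `singularKernel θ` with `θ = β + γ`. -/
structure LocalDomination {E : Type*} [NormedAddCommGroup E] (F' : ℝ → ℝ → E)
    (T θ t ε C : ℝ) : Prop where
  pos : 0 < ε
  nonneg : 0 ≤ C
  integrableOn_iSup : IntegrableOn (fun s => ⨆ r : window T t ε, ‖F' r s‖) (Iic (t - 2 * ε))
  norm_le : ∀ r ∈ window T t ε, ∀ s ∈ Ico (t - 2 * ε) r, ‖F' r s‖ ≤ C * singularKernel θ r s

namespace LocalDomination

variable {E : Type*} [NormedAddCommGroup E] {F F' : ℝ → ℝ → E} {T θ t ε C : ℝ}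

lemma norm_le_singularKernel (h : LocalDomination F' T θ t ε C) (hθ : 0 ≤ θ) {r s m : ℝ}
    (hr : r ∈ window T t ε) (hs : t - 2 * ε ≤ s) (hsm : s < m) (hmr : m ≤ r) :
    ‖F' r s‖ ≤ C * singularKernel θ m s :=
  (h.norm_le r hr s ⟨hs, hsm.trans_le hmr⟩).trans
    (mul_le_mul_of_nonneg_left (singularKernel_le_of_lt_of_le hθ hsm hmr) h.nonneg)

lemma exists_integrableOn_bound (h : LocalDomination F' T θ t ε C) (hθ0 : 0 ≤ θ) (hθ1 : θ < 1)
    (hcont : ∀ᵐ s, ContinuousOn (fun r => F' r s) (Icc 0 T \ {s})) {x : ℝ}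
    (hx : x ∈ Ico (t - 2 * ε) t) :
    ∃ D : ℝ → ℝ, IntegrableOn D (Iic x) ∧
      ∀ᵐ s, s ≤ x → ∀ r ∈ Icc 0 T, |r - t| ≤ (t - x) / 2 → ‖F' r s‖ ≤ D s := by
  refine ⟨fun s => if s ≤ t - 2 * ε then ⨆ r : window T t ε, ‖F' r s‖
    else C * singularKernel θ ((x + t) / 2) s, ?_, ?_⟩
  · rw [← Iic_union_Ioc_eq_Iic hx.1]
    refine (h.integrableOn_iSup.congr_fun (fun s hs => (if_pos hs).symm) measurableSet_Iic).union
      (IntegrableOn.congr_fun ?_ (fun s hs => (if_neg (not_le.2 hs.1)).symm) measurableSet_Ioc)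
    exact ((intervalIntegrable_singularKernel hθ1 _ _ x).const_mul C).1
  · filter_upwards [hcont] with s hs hsx r hr hrt
    have hrw : r ∈ window T t ε := mem_window hr (by linarith [hx.1])
    split_ifs with hsc
    · exact norm_le_iSup_window h.pos hs hsc hrw
    · exact h.norm_le_singularKernel hθ0 hrw (not_le.1 hsc).le (by linarith [hx.2])
        (by linarith [(abs_le.1 hrt).1])

lemma integrableOn_Iic (h : LocalDomination F' T θ t ε C) (hθ0 : 0 ≤ θ) (hθ1 : θ < 1)
    (hcont : ∀ᵐ s, ContinuousOn (fun r => F' r s) (Icc 0 T \ {s})) (ht : t ∈ Icc 0 T)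
    (hmeas : AEStronglyMeasurable (F' t)) : IntegrableOn (F' t) (Iic t) := by
  have hε := h.pos
  obtain ⟨D, hD, hFD⟩ := h.exists_integrableOn_bound hθ0 hθ1 hcont (x := t - ε)
    ⟨by linarith, by linarith⟩
  rw [← Iic_union_Ioc_eq_Iic (by linarith : t - ε ≤ t)]
  refine IntegrableOn.union (hD.mono' hmeas.restrict ?_)
    (((intervalIntegrable_singularKernel hθ1 t _ t).const_mul C).1.mono' hmeas.restrict ?_)
  · rw [ae_restrict_iff' measurableSet_Iic]
    filter_upwards [hFD] with s hs hsx using hs hsx t ht (by simp; linarith)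
  · rw [ae_restrict_iff' measurableSet_Ioc]
    filter_upwards [Measure.ae_ne volume t] with s hst hs
    exact h.norm_le t (mem_window ht (by simp; linarith)) s
      ⟨by linarith [hs.1], lt_of_le_of_ne hs.2 hst⟩

variable [NormedSpace ℝ E]

lemma norm_integral_le (h : LocalDomination F' T θ t ε C) (hθ0 : 0 ≤ θ) (hθ1 : θ < 1)
    {r x : ℝ} (hr : r ∈ Icc 0 T) (hx : x ∈ Ioo (t - ε) t) (hrt : |r - t| ≤ t - x) :
    ‖∫ s in x..r, F' r s‖ ≤ 4 * C / (1 - θ) * (2 * (t - x)) ^ (1 - θ) := by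
  have hrt' := abs_le.1 hrt
  refine (norm_integral_le_of_norm_le_singularKernel hθ0 hθ1 h.nonneg (by linarith)
    (ae_of_all _ fun s hs => h.norm_le r (mem_window hr (by linarith [hx.1])) s
      ⟨by linarith [hs.1, hx.1], hs.2⟩)).trans ?_
  exact mul_le_mul_of_nonneg_left (rpow_le_rpow (by linarith) (by linarith) (by linarith))
    (div_nonneg (by linarith [h.nonneg]) (by linarith))

lemma norm_integral_slope_le (h : LocalDomination F' T θ t ε C) (hθ0 : 0 ≤ θ) (hθ1 : θ < 1)
    (hderiv : ∀ᵐ s, ∀ r ∈ Icc 0 T \ {s}, HasDerivAt (fun r => F r s) (F' r s) r)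
    (ht : t ∈ Icc 0 T) {r x : ℝ} (hr : r ∈ Icc 0 T) (hx : x ∈ Ioo (t - ε) t)
    (hrt : |r - t| ≤ t - x) :
    ‖∫ s in x..min t r, slope (fun r => F r s) t r‖
      ≤ 4 * C / (1 - θ) * (2 * (t - x)) ^ (1 - θ) := by
  have hrt' := abs_le.1 hrt
  have hxm : x ≤ min t r := le_min hx.2.le (by linarith)
  refine (norm_integral_le_of_norm_le_singularKernel hθ0 hθ1 h.nonneg hxm ?_).trans ?_
  · filter_upwards [hderiv] with s hs hsm
    refine norm_slope_le_of_lt_min ordConnected_Icc ht hr hs hsm.2 fun r' hr' => ?_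
    have hr't := abs_sub_left_of_mem_uIcc hr'
    exact h.norm_le_singularKernel hθ0 (mem_window (uIcc_subset_Icc ht hr hr') (by linarith [hx.1]))
      (by linarith [hsm.1, hx.1]) hsm.2 hr'.1
  · exact mul_le_mul_of_nonneg_left (rpow_le_rpow (by linarith)
      (by linarith [min_le_left t r]) (by linarith)) (div_nonneg (by linarith [h.nonneg])
      (by linarith))

lemma tendsto_integral_Iic_of_lt (h : LocalDomination F' T θ t ε C) (hθ0 : 0 ≤ θ)
    (hθ1 : θ < 1) (hcont : ∀ᵐ s, ContinuousOn (fun r => F' r s) (Icc 0 T \ {s}))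
    (hint : ∀ r ∈ Icc 0 T, IntegrableOn (F' r) (Iic r)) (ht : t ∈ Icc 0 T) {x : ℝ}
    (hx : x ∈ Ioo (t - ε) t) :
    Tendsto (fun r => ∫ s in Iic x, F' r s) (𝓝[Icc 0 T] t) (𝓝 (∫ s in Iic x, F' t s)) := by
  have hρ : 0 < (t - x) / 2 := by linarith [hx.2]
  obtain ⟨D, hD, hFD⟩ := h.exists_integrableOn_bound hθ0 hθ1 hcont (x := x)
    ⟨by linarith [hx.1, h.pos], hx.2⟩
  refine tendsto_integral_filter_of_dominated_convergence D ?_ ?_ hD ?_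
  · filter_upwards [eventually_mem_and_abs_sub_le hρ] with r hr
    exact ((hint r hr.1).mono_set
      (Iic_subset_Iic.2 (by linarith [(abs_le.1 hr.2).1]))).aestronglyMeasurable
  · filter_upwards [eventually_mem_and_abs_sub_le hρ] with r hr
    rw [ae_restrict_iff' measurableSet_Iic]
    filter_upwards [hFD] with s hs hsx using hs hsx r hr.1 hr.2
  · rw [ae_restrict_iff' measurableSet_Iic]
    filter_upwards [hcont] with s hs hsx
    exact continuousWithinAt_sdiff_singleton.1
      (hs t ⟨ht, fun hts => by linarith [hx.2, mem_Iic.1 hsx, show t = s from hts]⟩)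

lemma tendsto_integral_Iic_slope_of_lt (h : LocalDomination F' T θ t ε C) (hθ0 : 0 ≤ θ)
    (hθ1 : θ < 1) (hF : ∀ r ∈ Icc 0 T, Integrable (F r))
    (hderiv : ∀ᵐ s, ∀ r ∈ Icc 0 T \ {s}, HasDerivAt (fun r => F r s) (F' r s) r)
    (hcont : ∀ᵐ s, ContinuousOn (fun r => F' r s) (Icc 0 T \ {s})) (ht : t ∈ Icc 0 T)
    {x : ℝ} (hx : x ∈ Ioo (t - ε) t) :
    Tendsto (fun r => ∫ s in Iic x, slope (fun r => F r s) t r) (𝓝[Icc 0 T \ {t}] t)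
      (𝓝 (∫ s in Iic x, F' t s)) := by
  have hρ : 0 < (t - x) / 2 := by linarith [hx.2]
  obtain ⟨D, hD, hFD⟩ := h.exists_integrableOn_bound hθ0 hθ1 hcont (x := x)
    ⟨by linarith [hx.1, h.pos], hx.2⟩
  refine tendsto_integral_filter_of_dominated_convergence D ?_ ?_ hD ?_
  · filter_upwards [eventually_mem_nhdsWithin] with r hr
    exact (integrable_slope (hF t ht) (hF r hr.1)).aestronglyMeasurable.restrict
  · filter_upwards [eventually_mem_and_abs_sub_le hρ] with r hr
    rw [ae_restrict_iff' measurableSet_Iic]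
    filter_upwards [hderiv, hFD] with s hs hsD hsx
    have := (abs_le.1 hr.2).1
    have := mem_Iic.1 hsx
    refine norm_slope_le_of_lt_min ordConnected_Icc ht hr.1.1 hs
      (lt_min (by linarith) (by linarith)) fun r' hr' => ?_
    exact hsD hsx r' (uIcc_subset_Icc ht hr.1.1 hr') ((abs_sub_left_of_mem_uIcc hr').trans hr.2)
  · rw [ae_restrict_iff' measurableSet_Iic]
    filter_upwards [hderiv] with s hs hsx
    exact hasDerivWithinAt_iff_tendsto_slope.1
      ((hs t ⟨ht, fun hts => by linarith [hx.2, mem_Iic.1 hsx, show t = s from hts]⟩)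
        |>.hasDerivWithinAt)

lemma continuousWithinAt_integral_Iic (h : LocalDomination F' T θ t ε C) (hθ0 : 0 ≤ θ)
    (hθ1 : θ < 1) (hcont : ∀ᵐ s, ContinuousOn (fun r => F' r s) (Icc 0 T \ {s}))
    (hint : ∀ r ∈ Icc 0 T, IntegrableOn (F' r) (Iic r)) (ht : t ∈ Icc 0 T) :
    ContinuousWithinAt (fun r => ∫ s in Iic r, F' r s) (Icc 0 T) t := by
  have hε := h.pos
  refine tendsto_setIntegral_Iic_of_tail_le (a := id) (g := F') nhdsWithin_le_nhds
    (eventually_mem_nhdsWithin.mono hint) (hint t ht)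
    (tendsto_mul_rpow_sub_nhdsLT hθ1 (4 * C / (1 - θ)) t) ?_ ?_
  · filter_upwards [Ioo_mem_nhdsLT (by linarith : t - ε < t)] with x hx
    exact h.tendsto_integral_Iic_of_lt hθ0 hθ1 hcont hint ht hx
  · filter_upwards [Ioo_mem_nhdsLT (by linarith : t - ε < t)] with x hx
    refine ⟨?_, h.norm_integral_le hθ0 hθ1 ht hx (by simp; linarith [hx.2])⟩
    filter_upwards [eventually_mem_and_abs_sub_le (by linarith [hx.2] : 0 < t - x)] with r hr
    exact h.norm_integral_le hθ0 hθ1 hr.1 hx hr.2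

lemma tendsto_integral_Iic_slope (h : LocalDomination F' T θ t ε C) (hθ0 : 0 ≤ θ)
    (hθ1 : θ < 1) (hF : ∀ r ∈ Icc 0 T, Integrable (F r))
    (hderiv : ∀ᵐ s, ∀ r ∈ Icc 0 T \ {s}, HasDerivAt (fun r => F r s) (F' r s) r)
    (hcont : ∀ᵐ s, ContinuousOn (fun r => F' r s) (Icc 0 T \ {s}))
    (hint : IntegrableOn (F' t) (Iic t)) (ht : t ∈ Icc 0 T) :
    Tendsto (fun r => ∫ s in Iic (min t r), slope (fun r => F r s) t r)
      (𝓝[Icc 0 T \ {t}] t) (𝓝 (∫ s in Iic t, F' t s)) := by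
  have hε := h.pos
  refine tendsto_setIntegral_Iic_of_tail_le
    (((continuous_const.min continuous_id).tendsto' t t (min_self t)).mono_left
      nhdsWithin_le_nhds)
    (eventually_mem_nhdsWithin.mono fun r hr =>
      (integrable_slope (hF t ht) (hF r hr.1)).integrableOn)
    hint (tendsto_mul_rpow_sub_nhdsLT hθ1 (4 * C / (1 - θ)) t) ?_ ?_
  · filter_upwards [Ioo_mem_nhdsLT (by linarith : t - ε < t)] with x hx
    exact h.tendsto_integral_Iic_slope_of_lt hθ0 hθ1 hF hderiv hcont ht hx
  · filter_upwards [Ioo_mem_nhdsLT (by linarith : t - ε < t)] with x hx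
    refine ⟨?_, h.norm_integral_le hθ0 hθ1 ht hx (by simp; linarith [hx.2])⟩
    filter_upwards [eventually_mem_and_abs_sub_le (by linarith [hx.2] : 0 < t - x)] with r hr
    exact h.norm_integral_slope_le hθ0 hθ1 hderiv ht hr.1.1 hx hr.2

end LocalDomination

theorem differentiability_of_volterra_integral
    (T : ℝ) (hT : 0 < T) (τ : ℝ) (hτ : τ ≤ 0) (β γ : ℝ)
    (hβ : β ∈ Set.Ioo (0 : ℝ) 1) (hγ : γ ∈ Set.Ioo (0 : ℝ) 1) (hβγ : β + γ < 1)
    (F F' : ℝ → ℝ → ℂ)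
    (hInt : ∀ t ∈ Set.Icc 0 T, Integrable (F t) (volume : Measure ℝ))
    (hContF : ContinuousOn (fun p : ℝ × ℝ => F p.1 p.2)
      {p : ℝ × ℝ | τ ≤ p.2 ∧ p.2 ≤ p.1})
    (hDeriv : ∀ᵐ s ∂(volume : Measure ℝ),
      (∀ t ∈ Set.Icc 0 T \ {s}, HasDerivAt (fun r => F r s) (F' t s) t) ∧
      ContinuousOn (fun t => F' t s) (Set.Icc 0 T \ {s}))
    (hLoc : ∀ t ∈ Set.Icc 0 T, ∃ ε > (0 : ℝ), ∃ C > (0 : ℝ),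
      (IntegrableOn
        (fun s => ⨆ r : Set.Icc (max 0 (t - ε)) (min (t + ε) T),
          ‖F' (r : ℝ) s‖)
        (Set.Iic (t - 2 * ε)) (volume : Measure ℝ)) ∧
      (∀ r ∈ Set.Icc (max 0 (t - ε)) (min (t + ε) T), ∀ s ∈ Set.Ico (t - 2 * ε) r,
        ‖F' r s‖ ≤ C * |s| ^ (-β) * |r - s| ^ (-γ))) :
    (∀ t ∈ Set.Icc 0 T,
      HasDerivWithinAt (fun t => ∫ s in Set.Iic t, F t s)
        (F t t + ∫ s in Set.Iic t, F' t s) (Set.Icc 0 T) t) ∧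
    ContinuousOn (fun t => F t t + ∫ s in Set.Iic t, F' t s) (Set.Icc 0 T) := by
  have hθ0 : 0 ≤ β + γ := by linarith [hβ.1, hγ.1]
  have hderiv := hDeriv.mono fun s hs => hs.1
  have hcont := hDeriv.mono fun s hs => hs.2
  have hdom : ∀ t ∈ Icc 0 T, ∃ ε C, LocalDomination F' T (β + γ) t ε C := fun t ht => by
    obtain ⟨ε, hε, C, hC, hsup, hker⟩ := hLoc t ht
    refine ⟨ε, C, hε, hC.le, hsup, fun r hr s hs => (hker r hr s hs).trans ?_⟩
    rw [mul_assoc, singularKernel, abs_sub_comm s r]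
    exact mul_le_mul_of_nonneg_left
      (rpow_neg_mul_rpow_neg_le_add hβ.1 hγ.1 (abs_nonneg _) (abs_nonneg _)) hC.le
  have hint : ∀ t ∈ Icc 0 T, IntegrableOn (F' t) (Iic t) := fun t ht => by
    obtain ⟨ε, C, h⟩ := hdom t ht
    refine h.integrableOn_Iic hθ0 hβγ hcont ht (aestronglyMeasurable_of_hasDerivWithinAt ht
      ((uniqueDiffOn_Icc hT t ht).accPt) (fun r hr => (hInt r hr).1) ?_)
    filter_upwards [hderiv, Measure.ae_ne volume t] with s hs hst
    exact (hs t ⟨ht, hst.symm⟩).hasDerivWithinAt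
  have hdiag : ContinuousOn (fun t => F t t) (Icc 0 T) := hContF.comp
    (continuous_id.prodMk continuous_id).continuousOn fun t ht => ⟨hτ.trans ht.1, le_rfl⟩
  refine ⟨fun t ht => ?_, hdiag.add fun t ht => ?_⟩
  all_goals obtain ⟨ε, C, h⟩ := hdom t ht
  · rw [hasDerivWithinAt_iff_tendsto_slope, add_comm]
    refine ((h.tendsto_integral_Iic_slope hθ0 hβγ hInt hderiv hcont (hint t ht) ht).add
      (tendsto_smul_integral_of_eventually_norm_sub_le (G := fun r s => F (max t r) s)
        (nhdsWithin_mono _ fun r hr => hr.2) ?_ fun δ hδ => ?_)).congr' ?_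
    · filter_upwards [self_mem_nhdsWithin] with r hr
      exact (hInt _ ⟨le_max_of_le_left ht.1, max_le ht.2 hr.1.2⟩).intervalIntegrable
    · exact (eventually_norm_sub_le_of_continuousWithinAt (hτ.trans ht.1)
        (hContF _ ⟨hτ.trans ht.1, le_rfl⟩) hδ).filter_mono
        (nhdsWithin_mono _ fun r hr => hτ.trans hr.1.1)
    · filter_upwards [self_mem_nhdsWithin] with r hr
      exact (slope_integral_Iic (hInt t ht) (hInt r hr.1)).symm
  · exact h.continuousWithinAt_integral_Iic hθ0 hβγ hcont hint ht
end
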